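/- Let P be an n×l binary matrix, set V := { s ∈ F₂ˡ : Pᵀ·P·s = 0 } and U := { s ∈ V : 4 divides the Hamming weight of P·s }. Then at θ = π/4, for every x ∈ F₂ˡ: ℙ[X=x] = 2^{−l} · ( 2·|U| · [x·u = 0 for all u ∈ U] − |V| · [x·v = 0 for all v ∈ V] ), where |U|, |V| denote cardinalities and [·] is the indicator (1 if the condition holds, 0 otherwise). -/

import Mathlib

open Matrix BigOperators Finset

noncomputable section

/-- The binary code generated by the columns of `P`: all vectors `P·s`. -/
def code {m : Type*} [Fintype m] {l : ℕ} (P : Matrix m (Fin l) (ZMod 2)) :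
    Finset (m → ZMod 2) :=
  Finset.image P.mulVec Finset.univ

/-- Rank function of the binary matroid of `P`: the F₂-rank of the submatrix of
rows indexed by `X`. -/
def rho {m : Type*} [Fintype m] {l : ℕ} (P : Matrix m (Fin l) (ZMod 2)) (X : Finset m) : ℕ :=
  (P.submatrix (fun i : {i // i ∈ X} => (i : m)) id).rank

/-- Tutte polynomial of the binary matroid of `P`. -/
def tutte {m : Type*} [Fintype m] {l : ℕ} (P : Matrix m (Fin l) (ZMod 2)) (x y : ℂ) : ℂ :=
  ∑ X ∈ (Finset.univ : Finset m).powerset,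
    (x - 1) ^ (rho P Finset.univ - rho P X) * (y - 1) ^ (X.card - rho P X)

/-- Normalised weight enumerator. -/
def alpha {m : Type*} [Fintype m] {l : ℕ} (P : Matrix m (Fin l) (ZMod 2)) (θ : ℝ) : ℂ :=
  (2 : ℂ) ^ (-(P.rank : ℤ)) *
    ∑ c ∈ code P, Complex.exp (Complex.I * θ * ((Fintype.card m : ℂ) - 2 * (hammingNorm c : ℂ)))

/-- The IQP probability distribution of an X-program `(P, θ)`. -/
def iqpProb {n l : ℕ} (P : Matrix (Fin n) (Fin l) (ZMod 2)) (θ : ℝ) (x : Fin l → ZMod 2) : ℝ :=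
  ‖(2 : ℂ) ^ (-(l : ℤ)) *
    ∑ a : Fin l → ZMod 2, (-1 : ℂ) ^ (x ⬝ᵥ a).val *
      Complex.exp (Complex.I * θ * ∑ j, (-1 : ℂ) ^ ((P j) ⬝ᵥ a).val)‖ ^ 2

/-- Affinification: the submatrix of rows `P_j` with `P_j ⬝ s = 1`. -/
def affin {n l : ℕ} (P : Matrix (Fin n) (Fin l) (ZMod 2)) (s : Fin l → ZMod 2) :
    Matrix {j : Fin n // (P j) ⬝ᵥ s = 1} (Fin l) (ZMod 2) :=
  Matrix.of fun j k => P j.1 k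

/-!
Write `f(a) = ∑ⱼ (-1)^(Pⱼ·a)`. Expanding the squared modulus and substituting `b = a + s`,
only the rows with `Pⱼ·s = 1` contribute to `f(a) - f(a + s)`, each by `±2`; at `θ = π/4`
the phase factor therefore becomes `i^|Ps| · (-1)^(Ps·Pa) = i^|Ps| · (-1)^(PᵀPs·a)`, and
summing over `a` leaves exactly the `s ∈ V`. For `s ∈ V` the weight `|Ps|` is even, so
`i^|Ps| = ±1` according as `s ∈ U`. Both `V` and `U` are subgroups (for `U` because
`|c + d| = |c| + |d| - 2|c ∧ d|` and `Ps·Pt = 0` on `V`), so the remaining character sums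
are `|U|`, `|V|` or `0`.
-/

open Complex ComplexConjugate

lemma ZMod.neg_one_pow_val_add {R : Type*} [Ring R] (u v : ZMod 2) :
    (-1 : R) ^ (u + v).val = (-1) ^ u.val * (-1) ^ v.val := by
  rw [ZMod.val_add, ← neg_one_pow_eq_pow_mod_two, pow_add]

lemma ZMod.prod_neg_one_pow_val {R ι : Type*} [CommRing R] (s : Finset ι) (f : ι → ZMod 2) :
    ∏ i ∈ s, (-1 : R) ^ (f i).val = (-1) ^ (∑ i ∈ s, f i).val := by
  classical
  induction s using Finset.induction_on with
  | empty => simp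
  | insert i s hi ih => rw [prod_insert hi, sum_insert hi, ih, ZMod.neg_one_pow_val_add]

lemma ZMod.eq_zero_or_eq_one_of_two (z : ZMod 2) : z = 0 ∨ z = 1 := by
  revert z; decide

lemma ZMod.neg_one_pow_val_eq_one_iff (z : ZMod 2) : (-1 : ℂ) ^ z.val = 1 ↔ z = 0 := by
  rcases z.eq_zero_or_eq_one_of_two with rfl | rfl <;>
    norm_num [show ZMod.val (1 : ZMod 2) = 1 from rfl]

open Classical in
lemma AddChar.sum_finset_eq_ite {A R : Type*} [AddGroup A] [CommRing R] [IsDomain R]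
    (ψ : AddChar A R) {S : Finset A} (hS : ∀ s ∈ S, ∀ t ∈ S, s + t ∈ S) :
    ∑ s ∈ S, ψ s = if ∀ s ∈ S, ψ s = 1 then (#S : R) else 0 := by
  split_ifs with h
  · simp [Finset.sum_congr rfl h]
  obtain ⟨u, hu, hψu⟩ := not_forall₂.1 h
  refine eq_zero_of_mul_eq_self_left hψu ?_
  have hshift : S.map (addRightEmbedding u) = S :=
    Finset.map_eq_of_subset fun _ ht => by
      obtain ⟨s, hs, rfl⟩ := Finset.mem_map.1 ht
      exact hS s hs u hu
  calc ψ u * ∑ s ∈ S, ψ s = ∑ s ∈ S.map (addRightEmbedding u), ψ s := by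
        simp [Finset.mul_sum, AddChar.map_add_eq_mul, mul_comm]
    _ = ∑ s ∈ S, ψ s := by rw [hshift]

section Signs

variable {ι : Type*} [Fintype ι]

def dotSign (x : ι → ZMod 2) : AddChar (ι → ZMod 2) ℂ where
  toFun a := (-1) ^ (x ⬝ᵥ a).val
  map_zero_eq_one' := by simp
  map_add_eq_mul' a b := by simp only [dotProduct_add, ZMod.neg_one_pow_val_add]

lemma dotSign_apply (x a : ι → ZMod 2) : dotSign x a = (-1) ^ (x ⬝ᵥ a).val := rfl

lemma dotSign_mul_conj_dotSign_add (x a s : ι → ZMod 2) :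
    dotSign x a * conj (dotSign x (a + s)) = dotSign x s := by
  have hconj : conj (dotSign x (a + s)) = dotSign x (a + s) := by
    simp only [dotSign_apply, map_pow, map_neg, map_one]
  rw [hconj, AddChar.map_add_eq_mul, ← mul_assoc, dotSign_apply, ← pow_add, ← two_mul, pow_mul,
    neg_one_sq, one_pow, one_mul]

lemma sum_dotSign_eq_ite (x : ι → ZMod 2) {S : Finset (ι → ZMod 2)}
    (hS : ∀ s ∈ S, ∀ t ∈ S, s + t ∈ S) :
    ∑ s ∈ S, dotSign x s = if ∀ s ∈ S, x ⬝ᵥ s = 0 then (#S : ℂ) else 0 := by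
  rw [(dotSign x).sum_finset_eq_ite hS]
  exact if_congr (by simp only [dotSign_apply, ZMod.neg_one_pow_val_eq_one_iff]) rfl rfl

lemma sum_dotSign_univ [DecidableEq ι] (w : ι → ZMod 2) :
    ∑ a, dotSign w a = if w = 0 then (2 : ℂ) ^ Fintype.card ι else 0 := by
  have hdot : (∀ a ∈ univ, w ⬝ᵥ a = 0) ↔ w = 0 := by
    refine ⟨fun h => funext fun i => ?_, fun h a _ => by simp [h]⟩
    simpa using h (Pi.single i 1) (mem_univ _)
  refine (sum_dotSign_eq_ite w fun _ _ _ _ => mem_univ _).trans ?_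
  simp only [hdot, card_univ, Fintype.card_fun, ZMod.card, Nat.cast_pow, Nat.cast_ofNat]

end Signs

section Hamming

variable {ι : Type*} [Fintype ι]

lemma hammingNorm_eq_sum_val (c : ι → ZMod 2) : hammingNorm c = ∑ i, (c i).val := by
  have h : ∀ z : ZMod 2, (if z ≠ 0 then 1 else 0) = z.val := by decide
  simp only [hammingNorm, card_eq_sum_ones, sum_filter, h]

lemma hammingNorm_add_add_two_mul (c d : ι → ZMod 2) :
    hammingNorm (c + d) + 2 * ∑ i, (c i * d i).val = hammingNorm c + hammingNorm d := by
  have h : ∀ u v : ZMod 2, (u + v).val + 2 * (u * v).val = u.val + v.val := by decide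
  simp only [hammingNorm_eq_sum_val, Pi.add_apply, mul_sum, ← sum_add_distrib, h]

lemma natCast_sum_val_mul (c d : ι → ZMod 2) :
    ((∑ i, (c i * d i).val : ℕ) : ZMod 2) = c ⬝ᵥ d := by
  simp only [Nat.cast_sum, ZMod.natCast_val, ZMod.cast_id', id, dotProduct]

lemma four_dvd_hammingNorm_add {c d : ι → ZMod 2} (h : c ⬝ᵥ d = 0)
    (hc : 4 ∣ hammingNorm c) (hd : 4 ∣ hammingNorm d) : 4 ∣ hammingNorm (c + d) := by
  rw [← natCast_sum_val_mul, ZMod.natCast_eq_zero_iff] at h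
  have := hammingNorm_add_add_two_mul c d
  omega

lemma two_dvd_hammingNorm {c : ι → ZMod 2} (h : c ⬝ᵥ c = 0) : 2 ∣ hammingNorm c := by
  have hsq : ∀ z : ZMod 2, (z * z).val = z.val := by decide
  rwa [← natCast_sum_val_mul, ZMod.natCast_eq_zero_iff, sum_congr rfl fun i _ => hsq (c i),
    ← hammingNorm_eq_sum_val] at h

end Hamming

lemma Complex.I_pow_of_two_dvd {k : ℕ} (h : 2 ∣ k) : I ^ k = if 4 ∣ k then 1 else -1 := by
  obtain ⟨m, rfl⟩ := h
  rw [pow_mul, I_sq]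
  split_ifs with hm
  · exact Even.neg_one_pow (by rw [even_iff_two_dvd]; omega)
  · exact Odd.neg_one_pow (by rw [← Nat.not_even_iff_odd, even_iff_two_dvd]; omega)

lemma sq_norm_sum_eq_sum_sum_mul_conj {G : Type*} [AddGroup G] [Fintype G] (F : G → ℂ) :
    ((‖∑ a, F a‖ ^ 2 : ℝ) : ℂ) = ∑ s, ∑ a, F a * conj (F (a + s)) := by
  calc ((‖∑ a, F a‖ ^ 2 : ℝ) : ℂ) = ∑ a, ∑ b, F a * conj (F b) := by
        rw [ofReal_pow, ← mul_conj', map_sum, sum_mul_sum]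
    _ = ∑ a, ∑ s, F a * conj (F (a + s)) := sum_congr rfl fun a _ =>
        (Fintype.sum_equiv (Equiv.addLeft a) _ _ fun _ => rfl).symm
    _ = _ := sum_comm

lemma exp_pi_div_four_mul_conj (u v : ZMod 2) :
    exp (I * ↑(Real.pi / 4) * (-1) ^ u.val) *
        conj (exp (I * ↑(Real.pi / 4) * (-1) ^ (u + v).val)) =
      I ^ v.val * (-1) ^ (v * u).val := by
  rw [← exp_conj, map_mul, map_mul, conj_I, conj_ofReal, map_pow, map_neg, map_one, ← exp_add]
  rcases u.eq_zero_or_eq_one_of_two with rfl | rfl <;>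
    rcases v.eq_zero_or_eq_one_of_two with rfl | rfl <;>
    norm_num [show ZMod.val (1 : ZMod 2) = 1 from rfl, show ZMod.val (2 : ZMod 2) = 0 from rfl]
  · convert exp_pi_div_two_mul_I using 2; ring
  · convert exp_neg_pi_div_two_mul_I using 2; ring

lemma exp_pi_div_four_mul_conj_add {m k : Type*} [Fintype m] [Fintype k]
    (P : Matrix m k (ZMod 2)) (a s : k → ZMod 2) :
    exp (I * ↑(Real.pi / 4) * ∑ j, (-1 : ℂ) ^ (P j ⬝ᵥ a).val) *
        conj (exp (I * ↑(Real.pi / 4) * ∑ j, (-1 : ℂ) ^ (P j ⬝ᵥ (a + s)).val)) =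
      I ^ hammingNorm (P *ᵥ s) * (-1) ^ ((P *ᵥ s) ⬝ᵥ (P *ᵥ a)).val := by
  rw [mul_sum, mul_sum, exp_sum, exp_sum, map_prod, ← prod_mul_distrib]
  simp only [dotProduct_add, exp_pi_div_four_mul_conj]
  rw [prod_mul_distrib, prod_pow_eq_pow_sum, ZMod.prod_neg_one_pow_val, hammingNorm_eq_sum_val]
  rfl

lemma mulVec_dotProduct_mulVec {m k R : Type*} [Fintype m] [Fintype k] [CommSemiring R]
    (P : Matrix m k R) (s a : k → R) : (P *ᵥ s) ⬝ᵥ (P *ᵥ a) = ((Pᵀ * P) *ᵥ s) ⬝ᵥ a := by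
  rw [dotProduct_mulVec, ← mulVec_transpose, mulVec_mulVec]

section GramKernel

variable {m k : Type*} [Fintype m] [Fintype k] [DecidableEq k]

/-- The set `V` of the statement. -/
def gramKernel (P : Matrix m k (ZMod 2)) : Finset (k → ZMod 2) :=
  univ.filter fun s => (Pᵀ * P) *ᵥ s = 0

/-- The set `U` of the statement. -/
def doublyEvenGramKernel (P : Matrix m k (ZMod 2)) : Finset (k → ZMod 2) :=
  (gramKernel P).filter fun s => 4 ∣ hammingNorm (P *ᵥ s)

variable {P : Matrix m k (ZMod 2)}

lemma mem_gramKernel {s : k → ZMod 2} : s ∈ gramKernel P ↔ (Pᵀ * P) *ᵥ s = 0 := by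
  simp [gramKernel]

lemma mulVec_dotProduct_mulVec_eq_zero {s : k → ZMod 2} (hs : s ∈ gramKernel P)
    (t : k → ZMod 2) : (P *ᵥ s) ⬝ᵥ (P *ᵥ t) = 0 := by
  rw [mulVec_dotProduct_mulVec, mem_gramKernel.1 hs, zero_dotProduct]

lemma add_mem_gramKernel {s t : k → ZMod 2} (hs : s ∈ gramKernel P) (ht : t ∈ gramKernel P) :
    s + t ∈ gramKernel P := by
  rw [mem_gramKernel] at *
  rw [mulVec_add, hs, ht, add_zero]

lemma add_mem_doublyEvenGramKernel {s t : k → ZMod 2} (hs : s ∈ doublyEvenGramKernel P)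
    (ht : t ∈ doublyEvenGramKernel P) : s + t ∈ doublyEvenGramKernel P := by
  rw [doublyEvenGramKernel, mem_filter] at *
  refine ⟨add_mem_gramKernel hs.1 ht.1, ?_⟩
  rw [mulVec_add]
  exact four_dvd_hammingNorm_add (mulVec_dotProduct_mulVec_eq_zero hs.1 t) hs.2 ht.2

lemma sq_norm_sum_amplitude_pi_div_four (P : Matrix m k (ZMod 2)) (x : k → ZMod 2) :
    ((‖∑ a, (-1 : ℂ) ^ (x ⬝ᵥ a).val *
        exp (I * ↑(Real.pi / 4) * ∑ j, (-1 : ℂ) ^ (P j ⬝ᵥ a).val)‖ ^ 2 : ℝ) : ℂ) =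
      2 ^ Fintype.card k * ∑ s ∈ gramKernel P, dotSign x s * I ^ hammingNorm (P *ᵥ s) := by
  have hterm : ∀ s a, (-1 : ℂ) ^ (x ⬝ᵥ a).val *
        exp (I * ↑(Real.pi / 4) * ∑ j, (-1 : ℂ) ^ (P j ⬝ᵥ a).val) *
        conj ((-1 : ℂ) ^ (x ⬝ᵥ (a + s)).val *
          exp (I * ↑(Real.pi / 4) * ∑ j, (-1 : ℂ) ^ (P j ⬝ᵥ (a + s)).val)) =
      dotSign x s * I ^ hammingNorm (P *ᵥ s) * dotSign ((Pᵀ * P) *ᵥ s) a := by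
    intro s a
    rw [map_mul, mul_mul_mul_comm, ← dotSign_apply, ← dotSign_apply, dotSign_mul_conj_dotSign_add,
      exp_pi_div_four_mul_conj_add, mulVec_dotProduct_mulVec, mul_assoc]
    rfl
  rw [sq_norm_sum_eq_sum_sum_mul_conj]
  simp only [hterm, ← mul_sum, sum_dotSign_univ, mul_ite, mul_zero]
  rw [← sum_filter, mul_sum]
  exact sum_congr rfl fun _ _ => mul_comm _ _

lemma sum_gramKernel_dotSign_mul_I_pow (P : Matrix m k (ZMod 2)) (x : k → ZMod 2) :
    ∑ s ∈ gramKernel P, dotSign x s * I ^ hammingNorm (P *ᵥ s) =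
      2 * ∑ s ∈ doublyEvenGramKernel P, dotSign x s - ∑ s ∈ gramKernel P, dotSign x s := by
  have hterm : ∀ s ∈ gramKernel P, dotSign x s * I ^ hammingNorm (P *ᵥ s) =
      2 * (if 4 ∣ hammingNorm (P *ᵥ s) then dotSign x s else 0) - dotSign x s := by
    intro s hs
    rw [I_pow_of_two_dvd (two_dvd_hammingNorm (mulVec_dotProduct_mulVec_eq_zero hs _))]
    split_ifs <;> ring
  rw [sum_congr rfl hterm, sum_sub_distrib, ← mul_sum, ← sum_filter, doublyEvenGramKernel]

end GramKernel

/-- with `V = {s : Pᵀ·P·s = 0}` and `U = {s ∈ V : 4 ∣ |P·s|}`, at `θ = π/4`: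
`ℙ[X=x] = 2^{−l} · (2|U|·[x ⊥ U] − |V|·[x ⊥ V])`. -/
theorem iqpProb_pi_div_four_formula {n l : ℕ} (P : Matrix (Fin n) (Fin l) (ZMod 2))
    (x : Fin l → ZMod 2) :
    iqpProb P (Real.pi / 4) x =
      (2 : ℝ) ^ (-(l : ℤ)) *
        (2 * (Finset.univ.filter (fun s : Fin l → ZMod 2 =>
              (Pᵀ * P).mulVec s = 0 ∧ 4 ∣ hammingNorm (P.mulVec s))).card *
            (if ∀ u ∈ Finset.univ.filter (fun s : Fin l → ZMod 2 =>
                (Pᵀ * P).mulVec s = 0 ∧ 4 ∣ hammingNorm (P.mulVec s)), x ⬝ᵥ u = 0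
              then (1 : ℝ) else 0)
          - (Finset.univ.filter (fun s : Fin l → ZMod 2 => (Pᵀ * P).mulVec s = 0)).card *
            (if ∀ v ∈ Finset.univ.filter (fun s : Fin l → ZMod 2 =>
                (Pᵀ * P).mulVec s = 0), x ⬝ᵥ v = 0
              then (1 : ℝ) else 0)) := by
  rw [← filter_filter]
  change _ = _ * (2 * ((#(doublyEvenGramKernel P) : ℕ) : ℝ) *
    (if ∀ u ∈ doublyEvenGramKernel P, x ⬝ᵥ u = 0 then 1 else 0) - ((#(gramKernel P) : ℕ) : ℝ) *
    (if ∀ v ∈ gramKernel P, x ⬝ᵥ v = 0 then 1 else 0))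
  apply ofReal_injective
  rw [iqpProb, norm_mul, mul_pow, ofReal_mul, sq_norm_sum_amplitude_pi_div_four,
    sum_gramKernel_dotSign_mul_I_pow,
    sum_dotSign_eq_ite x fun _ hs _ => add_mem_doublyEvenGramKernel hs,
    sum_dotSign_eq_ite x fun _ hs _ => add_mem_gramKernel hs]
  have hscale : ((‖(2 : ℂ) ^ (-(l : ℤ))‖ ^ 2 : ℝ) : ℂ) * 2 ^ Fintype.card (Fin l) =
      ((2 : ℝ) ^ (-(l : ℤ)) : ℝ) := by
    rw [norm_zpow, Complex.norm_two, Fintype.card_fin]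
    push_cast
    rw [_root_.zpow_neg, zpow_natCast]
    field_simp
  rw [← mul_assoc, hscale]
  split_ifs <;> push_cast <;> ring
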